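/- arXiv:2311.14893 — 3 statements merged into one kernel-verified Lean document; each statement's English description precedes it below -/
import Mathlib

section
/- For a chain complex of finite-dimensional inner product spaces over ℝ or ℂ, each space decomposes orthogonally as C_p = ker(Δ_p) ⊕ Im(d_{p+1}) ⊕ Im(d_p^*), where Δ_p = d_{p+1}d_{p+1}^* + d_p^* d_p is the p-th Laplacian (Hodge decomposition). -/
/-
The kernel of `Δ = f f* + g* g` is `ker f* ∩ ker g`, since
`⟪Δ x, x⟫ = ‖f* x‖² + ‖g x‖²`; by `(range T)ᗮ = ker T*` this is the orthogonal
complement of `range f ⊔ range g*`. When `g ∘ f = 0` the two ranges are orthogonal,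
which gives the orthogonal decomposition `ker Δ ⊕ range f ⊕ range g*` of the space.
-/

open LinearMap

/-- The `p`-th (Hodge) Laplacian `Δ_p = d_{p+1} ∘ d_{p+1}^* + d_p^* ∘ d_p` of a chain
complex of finite-dimensional inner product spaces. -/
noncomputable def laplacian {𝕜 : Type} [RCLike 𝕜] {C : ℕ → Type}
    [∀ n, NormedAddCommGroup (C n)] [∀ n, InnerProductSpace 𝕜 (C n)]
    [∀ n, FiniteDimensional 𝕜 (C n)]
    (d : ∀ n : ℕ, C n →ₗ[𝕜] C (n - 1)) (p : ℕ) : C p →ₗ[𝕜] C p :=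
  (d (p + 1) ∘ₗ adjoint (d (p + 1)) : C p →ₗ[𝕜] C p) + adjoint (d p) ∘ₗ d p

namespace LinearMap

variable {𝕜 E V W : Type*} [RCLike 𝕜] [NormedAddCommGroup E] [InnerProductSpace 𝕜 E]
  [NormedAddCommGroup V] [InnerProductSpace 𝕜 V] [FiniteDimensional 𝕜 V]
  [NormedAddCommGroup W] [InnerProductSpace 𝕜 W] [FiniteDimensional 𝕜 W]

theorem range_le_orthogonal_range_adjoint {f : E →ₗ[𝕜] V} {g : V →ₗ[𝕜] W}
    (hgf : g ∘ₗ f = 0) : range f ≤ (range g.adjoint)ᗮ := by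
  rintro _ ⟨a, rfl⟩ _ ⟨b, rfl⟩
  rw [adjoint_inner_left, ← comp_apply, hgf, zero_apply, inner_zero_right]

variable [FiniteDimensional 𝕜 E]

theorem ker_self_comp_adjoint_add_adjoint_comp_self (f : E →ₗ[𝕜] V) (g : V →ₗ[𝕜] W) :
    ker (f ∘ₗ f.adjoint + g.adjoint ∘ₗ g) = ker f.adjoint ⊓ ker g := by
  refine le_antisymm (fun x hx => ?_) (fun x ⟨hf, hg⟩ => by simp_all)
  have hnorms : ‖f.adjoint x‖ ^ 2 + ‖g x‖ ^ 2 = 0 := by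
    calc ‖f.adjoint x‖ ^ 2 + ‖g x‖ ^ 2
        = RCLike.re (inner 𝕜 ((f ∘ₗ f.adjoint + g.adjoint ∘ₗ g) x) x) := by
          rw [add_apply, inner_add_left, map_add, comp_apply, comp_apply, ← adjoint_inner_right f,
            adjoint_inner_left g, inner_self_eq_norm_sq, inner_self_eq_norm_sq]
      _ = 0 := by rw [mem_ker.1 hx, inner_zero_left, map_zero]
  rw [add_eq_zero_iff_of_nonneg (by positivity) (by positivity)] at hnorms
  simp_all

theorem ker_self_comp_adjoint_add_adjoint_comp_self_eq_orthogonal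
    (f : E →ₗ[𝕜] V) (g : V →ₗ[𝕜] W) :
    ker (f ∘ₗ f.adjoint + g.adjoint ∘ₗ g) = (range f ⊔ range g.adjoint)ᗮ := by
  rw [ker_self_comp_adjoint_add_adjoint_comp_self, ← Submodule.inf_orthogonal,
    orthogonal_range, orthogonal_range, adjoint_adjoint]

end LinearMap

theorem statement5_general {𝕜 : Type} [RCLike 𝕜] {C : ℕ → Type}
    [∀ n, NormedAddCommGroup (C n)] [∀ n, InnerProductSpace 𝕜 (C n)]
    [∀ n, FiniteDimensional 𝕜 (C n)]
    (d : ∀ n : ℕ, C n →ₗ[𝕜] C (n - 1))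
    (hd : ∀ n : ℕ, (d n).comp (d (n + 1)) = 0) (p : ℕ) :
    (LinearMap.ker (laplacian d p) ⊔
        (LinearMap.range (d (p + 1)) : Submodule 𝕜 (C p)) ⊔
        LinearMap.range (adjoint (d p)) = ⊤) ∧
    (∀ x ∈ LinearMap.ker (laplacian d p),
      ∀ y ∈ (LinearMap.range (d (p + 1)) : Submodule 𝕜 (C p)),
        (inner 𝕜 x y : 𝕜) = 0) ∧
    (∀ x ∈ LinearMap.ker (laplacian d p),
      ∀ y ∈ LinearMap.range (adjoint (d p)), (inner 𝕜 x y : 𝕜) = 0) ∧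
    (∀ x ∈ (LinearMap.range (d (p + 1)) : Submodule 𝕜 (C p)),
      ∀ y ∈ LinearMap.range (adjoint (d p)), (inner 𝕜 x y : 𝕜) = 0) := by
  have hker : ker (laplacian d p) =
      ((range (d (p + 1)) : Submodule 𝕜 (C p)) ⊔ range (adjoint (d p)))ᗮ :=
    ker_self_comp_adjoint_add_adjoint_comp_self_eq_orthogonal (d (p + 1)) (d p)
  refine ⟨?_, ?_, ?_, ?_⟩
  · rw [hker, sup_assoc, sup_comm]
    exact Submodule.sup_orthogonal_of_hasOrthogonalProjection
  · intro x hx y hy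
    rw [hker] at hx
    exact Submodule.inner_left_of_mem_orthogonal (Submodule.mem_sup_left hy) hx
  · intro x hx y hy
    rw [hker] at hx
    exact Submodule.inner_left_of_mem_orthogonal (Submodule.mem_sup_right hy) hx
  · intro x hx y hy
    exact Submodule.inner_left_of_mem_orthogonal hy (range_le_orthogonal_range_adjoint (hd p) hx)

/-- **Hodge decomposition.** For a chain complex `(C, d)` of
finite-dimensional inner product spaces over `ℝ` or `ℂ` (indexed by `ℕ`, with
`d n : C n →ₗ C (n-1)` and `d 0 = 0`), each `C p` decomposes orthogonally as
`C p = ker Δ_p ⊕ Im d_{p+1} ⊕ Im d_p^*`, where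
`Δ_p = d_{p+1} ∘ d_{p+1}^* + d_p^* ∘ d_p`. -/
theorem statement5 {𝕜 : Type} [RCLike 𝕜] {C : ℕ → Type}
    [∀ n, NormedAddCommGroup (C n)] [∀ n, InnerProductSpace 𝕜 (C n)]
    [∀ n, FiniteDimensional 𝕜 (C n)]
    (d : ∀ n : ℕ, C n →ₗ[𝕜] C (n - 1))
    (hd0 : d 0 = 0)
    (hd : ∀ n : ℕ, (d n).comp (d (n + 1)) = 0) (p : ℕ) :
    (LinearMap.ker (laplacian d p) ⊔
        (LinearMap.range (d (p + 1)) : Submodule 𝕜 (C p)) ⊔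
        LinearMap.range (adjoint (d p)) = ⊤) ∧
    (∀ x ∈ LinearMap.ker (laplacian d p),
      ∀ y ∈ (LinearMap.range (d (p + 1)) : Submodule 𝕜 (C p)),
        (inner 𝕜 x y : 𝕜) = 0) ∧
    (∀ x ∈ LinearMap.ker (laplacian d p),
      ∀ y ∈ LinearMap.range (adjoint (d p)), (inner 𝕜 x y : 𝕜) = 0) ∧
    (∀ x ∈ (LinearMap.range (d (p + 1)) : Submodule 𝕜 (C p)),
      ∀ y ∈ LinearMap.range (adjoint (d p)), (inner 𝕜 x y : 𝕜) = 0) :=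
  statement5_general d hd p
end

section
/- Let G be a hypergraph with essential graph Ḡ, and consider the first chain group of the hypergraph path complex over a field, spanned by directed pairs (v_0,v_1) for edges {v_0,v_1} of Ḡ. Then ker(d_1) decomposes as ker(d_1|_{W_1}) ⊕ ker(d_1|_{W_2}), where W_1 is spanned by the sums e + e' of dual directed edges and W_2 by one directed edge per undirected edge, and dim ker(d_1) = |E_Ḡ| + (|E_Ḡ| − |V_G| + |C_Ḡ|) = 2|E_Ḡ| − |V_G| + |C_Ḡ|. -/
/-!
A directed edge `(v, w)` with `w < v` is `((v, w) + (w, v)) - (w, v)`, so the directed edges span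
`W₁ ⊔ W₂`. Since `d₁` kills every `e + e'`, the modular law splits `ker d₁` along this sum, and the
two pieces meet trivially because elements of `W₁` are invariant under swapping the endpoints while
those of `W₂` vanish off the pairs `v < w`.

For the dimension, rank–nullity for `d₁` on the `2|E|`-dimensional span of directed edges leaves
its image, spanned by the `(w) - (v)` for adjacent `v, w`. This is exactly the kernel of the map
`(V →₀ k) → (C →₀ k)` collapsing each connected component to a point, which is onto, so the image
has dimension `|V| - |C|`.
-/

/-- The boundary map `d_1` sending a directed edge `(v₀, v₁)` to `(v₁) - (v₀)` on the
vector space over the field `k` spanned by directed edges. -/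
noncomputable def edgeBoundary (k V : Type) [Field k] : ((V × V) →₀ k) →ₗ[k] (V →₀ k) :=
  (Finsupp.lift (V →₀ k) k (V × V))
    (fun e => Finsupp.single e.2 (1 : k) - Finsupp.single e.1 (1 : k))

open Finsupp Submodule Module

theorem Submodule.finrank_map_add_finrank_inf_ker {K M N : Type*} [DivisionRing K]
    [AddCommGroup M] [Module K M] [AddCommGroup N] [Module K N] [FiniteDimensional K M]
    (f : M →ₗ[K] N) (p : Submodule K M) :
    finrank K (p.map f) + finrank K ↥(p ⊓ LinearMap.ker f) = finrank K p := by
  have h := (f.domRestrict p).finrank_range_add_finrank_ker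
  rwa [LinearMap.range_domRestrict, LinearMap.ker_domRestrict, (p.equivSubtypeMap _).finrank_eq,
    map_comap_subtype] at h

theorem Finsupp.finrank_ker_lmapDomain_add_card {K α β : Type*} [DivisionRing K]
    [Fintype α] [Fintype β] {π : α → β} (hπ : Function.Surjective π) :
    finrank K (LinearMap.ker (lmapDomain K K π)) + Fintype.card β = Fintype.card α := by
  have h := (lmapDomain K K π).finrank_range_add_finrank_ker
  rwa [LinearMap.range_eq_top.2 (mapDomain_surjective hπ), finrank_top, finrank_finsupp_self,
    finrank_finsupp_self, add_comm] at h

namespace SimpleGraph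

variable {k V : Type*} [Ring k] {G : SimpleGraph V}

theorem single_sub_single_mem_span_of_reachable {v w : V} (h : G.Reachable v w) :
    single w (1 : k) - single v 1 ∈
      span k {f | ∃ v w, G.Adj v w ∧ f = single w (1 : k) - single v 1} := by
  obtain ⟨p⟩ := h
  induction p with
  | nil => simp
  | @cons u x w hux _ ih =>
    rw [← sub_add_sub_cancel]
    exact add_mem ih (subset_span ⟨u, x, hux, rfl⟩)

theorem span_single_sub_single_eq_ker_lmapDomain :
    span k {f | ∃ v w, G.Adj v w ∧ f = single w (1 : k) - single v 1} =
      LinearMap.ker (lmapDomain k k G.connectedComponentMk) := by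
  refine le_antisymm (span_le.2 ?_) fun f hf => ?_
  · rintro f ⟨v, w, hvw, rfl⟩
    simp only [SetLike.mem_coe, LinearMap.mem_ker, lmapDomain_apply, mapDomain_sub,
      mapDomain_single, ConnectedComponent.connectedComponentMk_eq_of_adj hvw, sub_self]
  · -- `σ` moves each vertex to a representative of its component: `g - σ_* g` is a combination
    -- of differences of reachable vertices, while `σ_* f` factors through `f`'s image, which is 0.
    set σ : V → V := fun v => (G.connectedComponentMk v).out
    have hσ : mapDomain σ f = 0 := by
      have hf' : mapDomain G.connectedComponentMk f = 0 := hf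
      rw [show σ = (·.out) ∘ G.connectedComponentMk from rfl, mapDomain_comp, hf',
        mapDomain_zero]
    suffices ∀ g : V →₀ k, g - mapDomain σ g ∈ span k _ by simpa [hσ] using this f
    intro g
    induction g using Finsupp.induction_linear with
    | zero => simp
    | add f g hf hg =>
      rw [mapDomain_add, add_sub_add_comm]
      exact add_mem hf hg
    | single v c =>
      have hv : G.Reachable (σ v) v := ConnectedComponent.exact (Quot.out_eq _)
      rw [mapDomain_single, ← smul_single_one v c, ← smul_single_one (σ v) c, ← smul_sub]
      exact smul_mem _ c (single_sub_single_mem_span_of_reachable hv)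

end SimpleGraph

section EdgeSpaces

variable {k V : Type} [Field k] {G : SimpleGraph V}

theorem edgeBoundary_single (p : V × V) (c : k) :
    edgeBoundary k V (single p c) = single p.2 c - single p.1 c := by
  simp [edgeBoundary, smul_sub]

-- The spaces `Wfull`, `W1`, `W2` of the theorem.
variable (k G) in
noncomputable def directedEdgeSpan : Submodule k ((V × V) →₀ k) :=
  span k {f | ∃ v w : V, G.Adj v w ∧ f = single (v, w) (1 : k)}

variable (k G) in
noncomputable def symmetricEdgeSpan : Submodule k ((V × V) →₀ k) :=
  span k {f | ∃ v w : V, G.Adj v w ∧ f = single (v, w) (1 : k) + single (w, v) 1}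

variable (k G) in
noncomputable def orientedEdgeSpan [LinearOrder V] : Submodule k ((V × V) →₀ k) :=
  span k {f | ∃ v w : V, G.Adj v w ∧ v < w ∧ f = single (v, w) (1 : k)}

theorem directedEdgeSpan_eq_supported :
    directedEdgeSpan k G = supported k k {p : V × V | G.Adj p.1 p.2} := by
  rw [supported_eq_span_single, directedEdgeSpan]
  congr 1
  ext f
  simp [eq_comm]

theorem finrank_directedEdgeSpan [Fintype V] [Fintype G.edgeSet] :
    finrank k (directedEdgeSpan k G) = 2 * G.edgeFinset.card := by
  classical
  rw [directedEdgeSpan_eq_supported, (supportedEquivFinsupp _).finrank_eq, finrank_finsupp_self]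
  calc Fintype.card {p : V × V | G.Adj p.1 p.2}
      = Fintype.card G.Dart :=
        Fintype.card_congr
          ⟨fun p => ⟨p.1, p.2⟩, fun d => ⟨d.toProd, d.adj⟩, fun _ => rfl, fun _ => rfl⟩
    _ = 2 * G.edgeFinset.card := by convert G.dart_card_eq_twice_card_edges

theorem map_edgeBoundary_directedEdgeSpan :
    (directedEdgeSpan k G).map (edgeBoundary k V) =
      LinearMap.ker (lmapDomain k k G.connectedComponentMk) := by
  rw [← G.span_single_sub_single_eq_ker_lmapDomain, directedEdgeSpan, map_span]
  congr 1
  ext f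
  simp [edgeBoundary_single, @eq_comm _ f]

theorem finrank_directedEdgeSpan_inf_ker_add_card [Fintype V] [Fintype G.edgeSet]
    [Fintype G.ConnectedComponent] :
    finrank k ↥(directedEdgeSpan k G ⊓ LinearMap.ker (edgeBoundary k V)) + Fintype.card V =
      2 * G.edgeFinset.card + Fintype.card G.ConnectedComponent := by
  have h := (directedEdgeSpan k G).finrank_map_add_finrank_inf_ker (edgeBoundary k V)
  have hcomp :=
    finrank_ker_lmapDomain_add_card (K := k) (π := G.connectedComponentMk) Quot.mk_surjective
  rw [map_edgeBoundary_directedEdgeSpan, finrank_directedEdgeSpan] at h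
  omega

theorem symmetricEdgeSpan_le_ker : symmetricEdgeSpan k G ≤ LinearMap.ker (edgeBoundary k V) := by
  refine span_le.2 ?_
  rintro f ⟨v, w, -, rfl⟩
  simp [edgeBoundary_single]

theorem symmetricEdgeSpan_le_directedEdgeSpan : symmetricEdgeSpan k G ≤ directedEdgeSpan k G := by
  refine span_le.2 ?_
  rintro f ⟨v, w, hvw, rfl⟩
  exact add_mem (subset_span ⟨v, w, hvw, rfl⟩) (subset_span ⟨w, v, hvw.symm, rfl⟩)

theorem apply_swap_of_mem_symmetricEdgeSpan {x : (V × V) →₀ k} (hx : x ∈ symmetricEdgeSpan k G)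
    (p : V × V) : x p.swap = x p := by
  classical
  induction hx using span_induction with
  | mem f hf =>
    obtain ⟨v, w, -, rfl⟩ := hf
    obtain ⟨a, b⟩ := p
    simp only [Prod.swap_prod_mk, Finsupp.coe_add, Pi.add_apply, single_apply, Prod.mk.injEq]
    rw [add_comm]
    congr 2 <;> simp only [and_comm]
  | zero => rfl
  | add f g _ _ hf hg => simp [hf, hg]
  | smul c f _ hf => simp [hf]

variable [LinearOrder V]

theorem orientedEdgeSpan_le_directedEdgeSpan : orientedEdgeSpan k G ≤ directedEdgeSpan k G :=
  span_mono fun _ ⟨v, w, hvw, _, hf⟩ => ⟨v, w, hvw, hf⟩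

theorem orientedEdgeSpan_le_supported :
    orientedEdgeSpan k G ≤ supported k k {p : V × V | p.1 < p.2} :=
  span_le.2 fun _ ⟨_, _, _, hvw, hf⟩ => hf ▸ single_mem_supported k 1 hvw

theorem directedEdgeSpan_eq_sup :
    directedEdgeSpan k G = symmetricEdgeSpan k G ⊔ orientedEdgeSpan k G := by
  refine le_antisymm (span_le.2 ?_)
    (sup_le symmetricEdgeSpan_le_directedEdgeSpan orientedEdgeSpan_le_directedEdgeSpan)
  rintro f ⟨v, w, hvw, rfl⟩
  rcases lt_or_gt_of_ne hvw.ne with h | h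
  · exact mem_sup_right (subset_span ⟨v, w, hvw, h, rfl⟩)
  · rw [← add_sub_cancel_right (single (v, w) (1 : k)) (single (w, v) 1)]
    exact sub_mem (mem_sup_left (subset_span ⟨v, w, hvw, rfl⟩))
      (mem_sup_right (subset_span ⟨w, v, hvw.symm, h, rfl⟩))

theorem disjoint_symmetricEdgeSpan_orientedEdgeSpan :
    Disjoint (symmetricEdgeSpan k G) (orientedEdgeSpan k G) := by
  refine disjoint_def.2 fun x hsym hor => ?_
  have hsupp := (mem_supported' k x).1 (orientedEdgeSpan_le_supported hor)
  ext p
  rcases lt_or_ge p.1 p.2 with h | h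
  · rw [← apply_swap_of_mem_symmetricEdgeSpan hsym]
    exact hsupp _ (not_lt.2 h.le)
  · exact hsupp p (not_lt.2 h)

theorem directedEdgeSpan_inf_ker_eq_sup :
    directedEdgeSpan k G ⊓ LinearMap.ker (edgeBoundary k V) =
      symmetricEdgeSpan k G ⊓ LinearMap.ker (edgeBoundary k V) ⊔
        orientedEdgeSpan k G ⊓ LinearMap.ker (edgeBoundary k V) := by
  rw [directedEdgeSpan_eq_sup,
    sup_inf_assoc_of_le (orientedEdgeSpan k G) symmetricEdgeSpan_le_ker,
    inf_eq_left.2 symmetricEdgeSpan_le_ker]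

end EdgeSpaces

theorem statement15_general (k V : Type) [Field k] [Fintype V]
    [LinearOrder V]
    (G : SimpleGraph V) [Fintype G.edgeSet] :
    -- the relevant subspaces
    (let Wfull : Submodule k ((V × V) →₀ k) := Submodule.span k
        {f | ∃ v w : V, G.Adj v w ∧ f = Finsupp.single (v, w) (1 : k)};
     let W1 : Submodule k ((V × V) →₀ k) := Submodule.span k
        {f | ∃ v w : V, G.Adj v w ∧
          f = Finsupp.single (v, w) (1 : k) + Finsupp.single (w, v) (1 : k)};
     let W2 : Submodule k ((V × V) →₀ k) := Submodule.span k
        {f | ∃ v w : V, G.Adj v w ∧ v < w ∧ f = Finsupp.single (v, w) (1 : k)};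
     -- kernel of d₁ restricted to the span of directed edges decomposes
     (Wfull ⊓ LinearMap.ker (edgeBoundary k V)
        = (W1 ⊓ LinearMap.ker (edgeBoundary k V)) ⊔ (W2 ⊓ LinearMap.ker (edgeBoundary k V))) ∧
     Disjoint (W1 ⊓ LinearMap.ker (edgeBoundary k V)) (W2 ⊓ LinearMap.ker (edgeBoundary k V)) ∧
     -- dimension count: dim ker d₁ = |E_Ḡ| + (|E_Ḡ| - |V| + |C_Ḡ|) = 2|E_Ḡ| - |V| + |C_Ḡ|
     (Module.finrank k ↥(Wfull ⊓ LinearMap.ker (edgeBoundary k V)) : ℤ)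
        = 2 * (G.edgeFinset.card : ℤ) - Fintype.card V + Nat.card G.ConnectedComponent) := by
  classical
  have hdim := finrank_directedEdgeSpan_inf_ker_add_card (k := k) (G := G)
  rw [Nat.card_eq_fintype_card]
  refine ⟨directedEdgeSpan_inf_ker_eq_sup,
    disjoint_symmetricEdgeSpan_orientedEdgeSpan.mono inf_le_left inf_le_left, ?_⟩
  change (finrank k ↥(directedEdgeSpan k G ⊓ _) : ℤ) = _
  omega

/-- Let `G` be a finite hypergraph (hyperedge set `E`) with essential
graph `Ḡ` (vertices adjacent iff distinct and contained in a common hyperedge).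
Consider the first chain group of the hypergraph path complex over a field `k`,
spanned by the directed pairs `(v₀, v₁)` for edges `{v₀, v₁}` of `Ḡ`.  Then
`ker d₁` decomposes as `ker (d₁|_{W₁}) ⊕ ker (d₁|_{W₂})`, where `W₁` is spanned by
the sums `e + e'` of dual directed edges and `W₂` by one directed edge per
undirected edge, and `dim ker d₁ = 2|E_Ḡ| - |V| + |C_Ḡ|`. -/
theorem statement15 (k V : Type) [Field k] [Fintype V] [DecidableEq V]
    [LinearOrder V] (E : Finset (Finset V))
    (G : SimpleGraph V) [DecidableRel G.Adj] [Fintype G.edgeSet]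
    (hG : ∀ v w : V, G.Adj v w ↔ v ≠ w ∧ ∃ e ∈ E, v ∈ e ∧ w ∈ e) :
    -- the relevant subspaces
    (let Wfull : Submodule k ((V × V) →₀ k) := Submodule.span k
        {f | ∃ v w : V, G.Adj v w ∧ f = Finsupp.single (v, w) (1 : k)};
     let W1 : Submodule k ((V × V) →₀ k) := Submodule.span k
        {f | ∃ v w : V, G.Adj v w ∧
          f = Finsupp.single (v, w) (1 : k) + Finsupp.single (w, v) (1 : k)};
     let W2 : Submodule k ((V × V) →₀ k) := Submodule.span k
        {f | ∃ v w : V, G.Adj v w ∧ v < w ∧ f = Finsupp.single (v, w) (1 : k)};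
     -- kernel of d₁ restricted to the span of directed edges decomposes
     (Wfull ⊓ LinearMap.ker (edgeBoundary k V)
        = (W1 ⊓ LinearMap.ker (edgeBoundary k V)) ⊔ (W2 ⊓ LinearMap.ker (edgeBoundary k V))) ∧
     Disjoint (W1 ⊓ LinearMap.ker (edgeBoundary k V)) (W2 ⊓ LinearMap.ker (edgeBoundary k V)) ∧
     -- dimension count: dim ker d₁ = |E_Ḡ| + (|E_Ḡ| - |V| + |C_Ḡ|) = 2|E_Ḡ| - |V| + |C_Ḡ|
     (Module.finrank k ↥(Wfull ⊓ LinearMap.ker (edgeBoundary k V)) : ℤ)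
        = 2 * (G.edgeFinset.card : ℤ) - Fintype.card V + Nat.card G.ConnectedComponent) :=
  statement15_general k V G
end

section
/- In the persistent setting induced by an embedding i_•: A_• → B_• of chain complexes with auxiliary complex C_n = (d_n^B)^{-1}(i_{n-1}(A_{n-1})), one has Im(d_{n+1}^A) ⊆ Im(d_{n+1}^{B,A}) ⊆ ker(d_n^A), and consequently the nullity of the persistent Laplacian satisfies η(Δ_n^{B,A}) ≤ η(Δ_n^A). -/
/-!
A vector is harmonic for `Δ = T†T + SS†` exactly when it lies in `ker T ∩ ker S†`. Since
`ker S† = (range S)ᗮ`, enlarging `range S` shrinks the harmonic space. The persistent Laplacian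
uses `S = d^{B,A}_{n+1}`, whose range contains that of `d^A_{n+1}` because `i` is a chain map.
-/

open LinearMap

namespace LinearMap

section Adjoint

variable {𝕜 E F G : Type*} [RCLike 𝕜]
  [NormedAddCommGroup E] [InnerProductSpace 𝕜 E] [FiniteDimensional 𝕜 E]
  [NormedAddCommGroup F] [InnerProductSpace 𝕜 F] [FiniteDimensional 𝕜 F]
  [NormedAddCommGroup G] [InnerProductSpace 𝕜 G] [FiniteDimensional 𝕜 G]

theorem ker_adjoint_comp_self_add_comp_adjoint (T : E →ₗ[𝕜] F) (S : G →ₗ[𝕜] E) :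
    ker (adjoint T ∘ₗ T + S ∘ₗ adjoint S) = ker T ⊓ ker (adjoint S) := by
  refine le_antisymm (fun x hx => ?_) fun x ⟨hT, hS⟩ => by simp_all
  have hsum : RCLike.re (inner 𝕜 (T x) (T x))
      + RCLike.re (inner 𝕜 (adjoint S x) (adjoint S x)) = 0 := by
    rw [← adjoint_inner_right T x, adjoint_inner_left S, ← map_add, ← inner_add_right]
    simpa using congrArg (fun y => RCLike.re (inner 𝕜 x y)) (mem_ker.mp hx)
  obtain ⟨hT, hS⟩ := (add_eq_zero_iff_of_nonneg inner_self_nonneg inner_self_nonneg).mp hsum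
  exact ⟨re_inner_self_nonpos.mp hT.le, re_inner_self_nonpos.mp hS.le⟩

theorem ker_adjoint_le_ker_adjoint_of_range_le {T : F →ₗ[𝕜] E} {S : G →ₗ[𝕜] E}
    (h : range T ≤ range S) : ker (adjoint S) ≤ ker (adjoint T) := by
  rw [← orthogonal_range, ← orthogonal_range]
  exact Submodule.orthogonal_le h

end Adjoint

section Lift

variable {R A A' A'' B B' B'' : Type*} [Semiring R]
  [AddCommMonoid A] [Module R A] [AddCommMonoid A'] [Module R A'] [AddCommMonoid A''] [Module R A'']
  [AddCommMonoid B] [Module R B] [AddCommMonoid B'] [Module R B'] [AddCommMonoid B''] [Module R B'']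
  {g : B' →ₗ[R] B} {ι : A →ₗ[R] B} (r : (range ι).comap g →ₗ[R] A)

theorem range_le_range_of_lift (hr : ∀ x, ι (r x) = g x) {f : A' →ₗ[R] A} {ι' : A' →ₗ[R] B'}
    (hι : Function.Injective ι) (hcomm : ∀ a, g (ι' a) = ι (f a)) : range f ≤ range r := by
  rintro _ ⟨a, rfl⟩
  exact ⟨⟨ι' a, f a, (hcomm a).symm⟩, hι <| (hr _).trans (hcomm a)⟩

theorem range_le_ker_of_lift (hr : ∀ x, ι (r x) = g x) {h : A →ₗ[R] A''} {k : B →ₗ[R] B''}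
    {ι'' : A'' →ₗ[R] B''} (hι'' : Function.Injective ι'') (hkg : k ∘ₗ g = 0)
    (hcomm : ∀ a, k (ι a) = ι'' (h a)) : range r ≤ ker h := by
  rintro _ ⟨x, rfl⟩
  refine mem_ker.mpr <| hι'' ?_
  rw [← hcomm, hr, map_zero]
  exact LinearMap.congr_fun hkg x

end Lift

end LinearMap

theorem statement18_general {𝕜 : Type} [RCLike 𝕜] {A B : ℕ → Type}
    [∀ n, NormedAddCommGroup (A n)] [∀ n, InnerProductSpace 𝕜 (A n)]
    [∀ n, FiniteDimensional 𝕜 (A n)]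
    [∀ n, NormedAddCommGroup (B n)] [∀ n, InnerProductSpace 𝕜 (B n)]
    [∀ n, FiniteDimensional 𝕜 (B n)]
    (dA : ∀ n : ℕ, A n →ₗ[𝕜] A (n - 1)) (dB : ∀ n : ℕ, B n →ₗ[𝕜] B (n - 1))
    (hdA0 : dA 0 = 0)
    (hdB : ∀ n, (dB n).comp (dB (n + 1)) = 0)
    (i : ∀ n : ℕ, A n →ₗ[𝕜] B n)
    (hinj : ∀ n, Function.Injective (i n))
    (hcomm : ∀ n (a : A (n + 1)), dB (n + 1) (i (n + 1) a) = i n (dA (n + 1) a))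
    (n : ℕ)
    (dBA : ↥(Submodule.comap (dB (n + 1)) (LinearMap.range (i n))) →ₗ[𝕜] A n)
    (hdBA : ∀ x : ↥(Submodule.comap (dB (n + 1)) (LinearMap.range (i n))),
      i n (dBA x) = dB (n + 1) (x : B (n + 1))) :
    ((LinearMap.range (dA (n + 1)) : Submodule 𝕜 (A n)) ≤ LinearMap.range dBA) ∧
    (LinearMap.range dBA ≤ LinearMap.ker (dA n)) ∧
    (Module.finrank 𝕜
        ↥(LinearMap.ker (adjoint (dA n) ∘ₗ dA n + dBA ∘ₗ adjoint dBA))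
      ≤ Module.finrank 𝕜
        ↥(LinearMap.ker (adjoint (dA n) ∘ₗ dA n
            + (dA (n + 1) ∘ₗ adjoint (dA (n + 1)) : A n →ₗ[𝕜] A n)))) := by
  have hrange : range (dA (n + 1)) ≤ range dBA :=
    range_le_range_of_lift dBA hdBA (hinj n) (hcomm n)
  have hker : range dBA ≤ ker (dA n) := by
    cases n with
    | zero => simp [hdA0]
    | succ m => exact range_le_ker_of_lift dBA hdBA (hinj m) (hdB (m + 1)) (hcomm m)
  refine ⟨hrange, hker, Submodule.finrank_mono ?_⟩
  rw [ker_adjoint_comp_self_add_comp_adjoint, ker_adjoint_comp_self_add_comp_adjoint]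
  exact inf_le_inf_left _ (ker_adjoint_le_ker_adjoint_of_range_le hrange)

/-- Let `i : A → B` be a degreewise injective chain map of chain
complexes of finite-dimensional inner product spaces over `ℝ` or `ℂ`, with auxiliary
complex `C n = (d_n^B)⁻¹ (i (A (n-1)))`, and let `d^{B,A}_{n+1} : C (n+1) → A n` be
the restriction of `d_{n+1}^B` (characterized by `i n ∘ d^{B,A}_{n+1} = d^B_{n+1}`).
Then `Im d^A_{n+1} ⊆ Im d^{B,A}_{n+1} ⊆ ker d^A_n`, and the nullity of the persistent
Laplacian `Δ_n^{B,A} = (d_n^A)^* d_n^A + d^{B,A}_{n+1} (d^{B,A}_{n+1})^*` satisfies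
`η(Δ_n^{B,A}) ≤ η(Δ_n^A)`. -/
theorem statement18 {𝕜 : Type} [RCLike 𝕜] {A B : ℕ → Type}
    [∀ n, NormedAddCommGroup (A n)] [∀ n, InnerProductSpace 𝕜 (A n)]
    [∀ n, FiniteDimensional 𝕜 (A n)]
    [∀ n, NormedAddCommGroup (B n)] [∀ n, InnerProductSpace 𝕜 (B n)]
    [∀ n, FiniteDimensional 𝕜 (B n)]
    (dA : ∀ n : ℕ, A n →ₗ[𝕜] A (n - 1)) (dB : ∀ n : ℕ, B n →ₗ[𝕜] B (n - 1))
    (hdA0 : dA 0 = 0) (hdB0 : dB 0 = 0)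
    (hdA : ∀ n, (dA n).comp (dA (n + 1)) = 0)
    (hdB : ∀ n, (dB n).comp (dB (n + 1)) = 0)
    (i : ∀ n : ℕ, A n →ₗ[𝕜] B n)
    (hinj : ∀ n, Function.Injective (i n))
    (hcomm : ∀ n (a : A (n + 1)), dB (n + 1) (i (n + 1) a) = i n (dA (n + 1) a))
    (n : ℕ)
    (dBA : ↥(Submodule.comap (dB (n + 1)) (LinearMap.range (i n))) →ₗ[𝕜] A n)
    (hdBA : ∀ x : ↥(Submodule.comap (dB (n + 1)) (LinearMap.range (i n))),
      i n (dBA x) = dB (n + 1) (x : B (n + 1))) :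
    ((LinearMap.range (dA (n + 1)) : Submodule 𝕜 (A n)) ≤ LinearMap.range dBA) ∧
    (LinearMap.range dBA ≤ LinearMap.ker (dA n)) ∧
    (Module.finrank 𝕜
        ↥(LinearMap.ker (adjoint (dA n) ∘ₗ dA n + dBA ∘ₗ adjoint dBA))
      ≤ Module.finrank 𝕜
        ↥(LinearMap.ker (adjoint (dA n) ∘ₗ dA n
            + (dA (n + 1) ∘ₗ adjoint (dA (n + 1)) : A n →ₗ[𝕜] A n)))) :=
  statement18_general dA dB hdA0 hdB i hinj hcomm n dBA hdBA
end
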